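/- A nonzero matrix Z of size d_A d_B × d_A d_B over ℂ factorizes as a Kronecker product Z = X ⊗ Y (with X of size d_A and Y of size d_B) if and only if its realignment R(Z) has rank 1. -/

import Mathlib

open Matrix Kronecker

/-!
The realignment of `X ⊗ₖ Y` is the outer product of `X` and `Y` flattened to vectors, so it has
rank at most one, and exactly one since realignment is injective and `Z ≠ 0`. Conversely, a
matrix of rank one is an outer product `vecMulVec x y`, and reshaping `x` and `y` back into
square matrices gives the Kronecker factors.
-/

/-- Realignment of a matrix on a bipartite system:
`R(Z)_{(m,n),(μ,ν)} = Z_{(m,μ),(n,ν)}`. -/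
def realign {dA dB : Type*} (Z : Matrix (dA × dB) (dA × dB) ℂ) :
    Matrix (dA × dA) (dB × dB) ℂ :=
  Matrix.of fun p q => Z (p.1, q.1) (p.2, q.2)

namespace Matrix

variable {m n K : Type*} [Fintype n] [Field K]

theorem rank_eq_zero_iff {M : Matrix m n K} : M.rank = 0 ↔ M = 0 := by
  classical
  rw [rank, Submodule.finrank_eq_zero, LinearMap.range_eq_bot, ← toLin'_apply',
    LinearEquiv.map_eq_zero_iff]

theorem exists_eq_vecMulVec_of_rank_le_one [DecidableEq n] {M : Matrix m n K}
    (h : M.rank ≤ 1) : ∃ (x : m → K) (y : n → K), M = vecMulVec x y := by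
  rw [rank] at h
  obtain ⟨⟨x, _⟩, hx⟩ := finrank_le_one_iff.mp h
  have column_mem_span (j : n) : ∃ c : K, c • x = M *ᵥ Pi.single j 1 := by
    obtain ⟨c, hc⟩ := hx ⟨M *ᵥ Pi.single j 1, _, rfl⟩
    exact ⟨c, congrArg Subtype.val hc⟩
  choose y hy using column_mem_span
  refine ⟨x, y, ext fun i j => ?_⟩
  simpa [vecMulVec_apply, mul_comm] using (congrFun (hy j) i).symm

end Matrix

section Realign

variable {dA dB : Type*}

theorem realign_injective : Function.Injective (realign (dA := dA) (dB := dB)) :=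
  fun _ _ h => ext fun p q => congr($h (p.1, q.1) (p.2, q.2))

theorem realign_kronecker (X : Matrix dA dA ℂ) (Y : Matrix dB dB ℂ) :
    realign (X ⊗ₖ Y) = vecMulVec (Function.uncurry X) (Function.uncurry Y) :=
  rfl

end Realign

/-- A nonzero matrix factorizes as a Kronecker product iff its realignment has rank 1. -/
theorem kronecker_factorization_iff_rank_realign_eq_one {dA dB : ℕ}
    (Z : Matrix (Fin dA × Fin dB) (Fin dA × Fin dB) ℂ) (hZ : Z ≠ 0) :
    (∃ (X : Matrix (Fin dA) (Fin dA) ℂ) (Y : Matrix (Fin dB) (Fin dB) ℂ),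
      Z = X ⊗ₖ Y) ↔ (realign Z).rank = 1 := by
  have realign_ne_zero : realign Z ≠ 0 := realign_injective.ne hZ
  constructor
  · rintro ⟨X, Y, rfl⟩
    have rank_le_one : (realign (X ⊗ₖ Y)).rank ≤ 1 :=
      realign_kronecker X Y ▸ rank_vecMulVec_le _ _
    have rank_ne_zero : (realign (X ⊗ₖ Y)).rank ≠ 0 := rank_eq_zero_iff.not.mpr realign_ne_zero
    omega
  · intro h
    obtain ⟨x, y, hxy⟩ := exists_eq_vecMulVec_of_rank_le_one h.le
    exact ⟨of (Function.curry x), of (Function.curry y), realign_injective hxy⟩
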